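/- The counting function ζ(m,4) of 4-deviation sets satisfies ζ(m,4) = (((5+√5)/2)^⌊(m+1)/2⌋ + ((5−√5)/2)^⌊(m+1)/2⌋)/5 for all m ≥ 1. -/

import Mathlib

/-!
Read the parts of a deviation set alternately upward and downward from a running offset `t`,
negating `t` after each part so that the next part is always added. A deviation set from
offset `t` (with `|t| ≤ δ`) either starts with a part `1`, which is dropped and leaves offset
`-(t + 1)`, or with a part `a ≥ 2`, which is shrunk to `a - 1` from offset `t + 1`. Hence the
counts `W m t` of sets of size `m` from offset `t` satisfy
`W (m + 2) t = W (m + 1) (-(t + 1)) + W (m + 1) (t + 1)`.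
For `δ = 4` only the offsets `-4, …, 4` occur, and the relation
`W (m + 6) t + 5 W (m + 2) t = 5 W (m + 4) t` is checked at `m = 0` for each of them and then
propagates along the recursion. At `t = 0`, and with `ζ(5) = 10` checked directly, this gives
`ζ(m+4) = 5ζ(m+2) − 5ζ(m)` for `m ≥ 1`, whose characteristic roots are `(5 ± √5) / 2`; the odd
and the even sizes both start with `1, 3`.
-/

def IsDevSet (m δ : ℕ) (α : List ℕ) : Prop :=
  (∀ a ∈ α, 0 < a) ∧ α.sum = m ∧
  |∑ i ∈ Finset.range α.length, (-1 : ℤ) ^ i * (α.getD i 0 : ℤ)| ≤ 1 ∧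
  ∀ k : ℕ, |∑ i ∈ Finset.range k, (-1 : ℤ) ^ i * (α.getD i 0 : ℤ)| ≤ (δ : ℤ)

noncomputable def zeta (m δ : ℕ) : ℕ := Nat.card {α : List ℕ // IsDevSet m δ α}

open Finset

def altSum (α : List ℕ) (k : ℕ) : ℤ :=
  ∑ i ∈ range k, (-1 : ℤ) ^ i * (α.getD i 0 : ℤ)

@[simp]
lemma altSum_nil (k : ℕ) : altSum [] k = 0 := by
  simp [altSum]

@[simp]
lemma altSum_zero (α : List ℕ) : altSum α 0 = 0 := by
  simp [altSum]

lemma altSum_cons_succ (a : ℕ) (l : List ℕ) (k : ℕ) :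
    altSum (a :: l) (k + 1) = a - altSum l k := by
  simp only [altSum, sum_range_succ', List.getD_cons_succ, List.getD_cons_zero, pow_succ,
    pow_zero, one_mul, mul_neg_one, neg_mul, sum_neg_distrib]
  ring

/-- The offset `t` is negated after each part, so that the next part is always added to it. -/
def DevFrom (δ : ℕ) : ℤ → List ℕ → Prop
  | t, [] => |t| ≤ 1 ∧ |t| ≤ δ
  | t, a :: l => 0 < a ∧ |t| ≤ δ ∧ DevFrom δ (-(t + a)) l

section DevFrom

variable {δ : ℕ}

lemma DevFrom.abs_le {t : ℤ} : ∀ {α : List ℕ}, DevFrom δ t α → |t| ≤ δ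
  | [], h => h.2
  | _ :: _, h => h.2.1

lemma devFrom_iff (α : List ℕ) (t : ℤ) :
    DevFrom δ t α ↔ (∀ a ∈ α, 0 < a) ∧ |t + altSum α α.length| ≤ 1 ∧
      ∀ k, |t + altSum α k| ≤ δ := by
  induction α generalizing t with
  | nil => simp [DevFrom]
  | cons a l ih =>
    have hflip : ∀ k, |t + altSum (a :: l) (k + 1)| = |-(t + a) + altSum l k| := fun k => by
      rw [altSum_cons_succ, ← abs_neg]; ring_nf
    rw [← Nat.and_forall_add_one (p := fun k => |t + altSum (a :: l) k| ≤ δ)]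
    simp only [DevFrom, ih, List.mem_cons, forall_eq_or_imp, List.length_cons, hflip,
      altSum_zero, add_zero]
    tauto

lemma DevFrom.pos {t : ℤ} {α : List ℕ} (h : DevFrom δ t α) : ∀ a ∈ α, 0 < a :=
  ((devFrom_iff α t).1 h).1

lemma isDevSet_iff {m : ℕ} {α : List ℕ} : IsDevSet m δ α ↔ α.sum = m ∧ DevFrom δ 0 α := by
  simp only [IsDevSet, devFrom_iff, zero_add, altSum]
  tauto

end DevFrom

abbrev DevList (δ m : ℕ) (t : ℤ) : Type := {α : List ℕ // α.sum = m ∧ DevFrom δ t α}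

namespace DevList

variable {δ m : ℕ} {t : ℤ}

instance : Finite (DevList δ m t) :=
  Finite.of_injective (fun α => (⟨α.1, α.2.2.pos _, α.2.1⟩ : Composition m))
    fun _ _ h => Subtype.ext (congrArg Composition.blocks h)

lemma card_of_lt (ht : δ < |t|) : Nat.card (DevList δ m t) = 0 :=
  have : IsEmpty (DevList δ m t) := ⟨fun α => (α.2.2.abs_le.trans_lt ht).false⟩
  Nat.card_of_isEmpty

def consOne (ht : |t| ≤ δ) (l : DevList δ m (-(t + 1))) : DevList δ (m + 1) t :=
  ⟨1 :: l.1, by simp [l.2.1, add_comm], one_pos, ht, by exact_mod_cast l.2.2⟩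

def succHead (ht : |t| ≤ δ) : DevList δ (m + 1) (t + 1) → DevList δ (m + 2) t
  | ⟨[], h⟩ => absurd h.1 (by simp)
  | ⟨a :: l, h⟩ => ⟨(a + 1) :: l, by simp only [List.sum_cons] at h ⊢; omega, a.succ_pos, ht, by
      convert h.2.2.2 using 2; push_cast; ring⟩

lemma consOne_injective (ht : |t| ≤ δ) : Function.Injective (consOne (m := m) ht) :=
  fun _ _ h => Subtype.ext (List.cons_injective (congrArg Subtype.val h))

lemma succHead_injective (ht : |t| ≤ δ) : Function.Injective (succHead (m := m) ht) := by
  rintro ⟨_ | ⟨a, l⟩, ha⟩ ⟨_ | ⟨b, k⟩, hb⟩ h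
  · simp at ha
  · simp at ha
  · simp at hb
  · simp only [succHead, Subtype.mk.injEq, List.cons.injEq, add_left_inj] at h
    simp [h]

lemma consOne_ne_succHead (ht : |t| ≤ δ) (l : DevList δ (m + 1) (-(t + 1)))
    (k : DevList δ (m + 1) (t + 1)) : consOne ht l ≠ succHead ht k := by
  rcases k with ⟨_ | ⟨b, k⟩, hk⟩
  · simp at hk
  · simp only [consOne, succHead, ne_eq, Subtype.mk.injEq, List.cons.injEq, not_and]
    have := hk.2.1
    omega

lemma consOne_zero_surjective (ht : |t| ≤ δ) : Function.Surjective (consOne (m := 0) ht) := by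
  rintro ⟨_ | ⟨a, l⟩, hsum, hdev⟩
  · simp at hsum
  · have ha : a = 1 := by have := hdev.1; simp only [List.sum_cons] at hsum; omega
    subst ha
    exact ⟨⟨l, by simpa using hsum, by exact_mod_cast hdev.2.2⟩, rfl⟩

lemma consOne_succHead_surjective (ht : |t| ≤ δ) :
    Function.Surjective (Sum.elim (consOne (m := m + 1) ht) (succHead ht)) := by
  rintro ⟨_ | ⟨_ | _ | a, l⟩, hsum, hdev⟩
  · simp at hsum
  · exact absurd hdev.1 (lt_irrefl 0)
  · exact ⟨.inl ⟨l, by simp only [List.sum_cons] at hsum; omega, by exact_mod_cast hdev.2.2⟩, rfl⟩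
  · have hl : |-(t + (a + 2 : ℕ))| ≤ δ := hdev.2.2.abs_le
    refine ⟨.inr ⟨(a + 1) :: l, by simp only [List.sum_cons] at hsum ⊢; omega, a.succ_pos, ?_, ?_⟩, rfl⟩
    · rw [abs_le] at ht hl ⊢; push_cast at hl; constructor <;> linarith
    · convert hdev.2.2 using 2; push_cast; ring

lemma eq_nil (α : DevList δ 0 t) : α.1 = [] := by
  rcases α with ⟨_ | ⟨a, l⟩, hsum, hdev⟩
  · rfl
  · have := hdev.1; simp only [List.sum_cons] at hsum; omega

lemma card_zero : Nat.card (DevList δ 0 t) = if |t| ≤ 1 ∧ |t| ≤ δ then 1 else 0 := by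
  split_ifs with h
  · rw [Nat.card_eq_one_iff_unique]
    exact ⟨⟨fun α β => Subtype.ext ((eq_nil α).trans (eq_nil β).symm)⟩, ⟨⟨[], rfl, h⟩⟩⟩
  · rw [Nat.card_eq_zero]
    refine .inl ⟨fun α => h ?_⟩
    have hdev := α.2.2
    rwa [eq_nil α] at hdev

lemma card_one (ht : |t| ≤ δ) : Nat.card (DevList δ 1 t) = Nat.card (DevList δ 0 (-(t + 1))) :=
  (Nat.card_congr (Equiv.ofBijective _ ⟨consOne_injective ht, consOne_zero_surjective ht⟩)).symm

lemma card_add_two (ht : |t| ≤ δ) : Nat.card (DevList δ (m + 2) t) =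
    Nat.card (DevList δ (m + 1) (-(t + 1))) + Nat.card (DevList δ (m + 1) (t + 1)) := by
  rw [← Nat.card_sum]
  exact (Nat.card_congr (Equiv.ofBijective _ ⟨(consOne_injective ht).sumElim
    (succHead_injective ht) (consOne_ne_succHead ht), consOne_succHead_surjective ht⟩)).symm

end DevList

def walkCount (δ : ℕ) : ℕ → ℤ → ℕ
  | 0, t => if |t| ≤ 1 ∧ |t| ≤ δ then 1 else 0
  -- the only set of size `1` is `[1]`: there is no part to shrink
  | 1, t => if |t| ≤ δ then walkCount δ 0 (-(t + 1)) else 0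
  | m + 2, t => if |t| ≤ δ then walkCount δ (m + 1) (-(t + 1)) + walkCount δ (m + 1) (t + 1) else 0

section walkCount

variable {δ : ℕ}

lemma walkCount_of_lt {t : ℤ} (ht : δ < |t|) : ∀ m, walkCount δ m t = 0
  | 0 => if_neg fun h => h.2.not_gt ht
  | 1 => if_neg ht.not_ge
  | _ + 2 => if_neg ht.not_ge

lemma walkCount_add_two {m : ℕ} {t : ℤ} (ht : |t| ≤ δ) :
    walkCount δ (m + 2) t = walkCount δ (m + 1) (-(t + 1)) + walkCount δ (m + 1) (t + 1) :=
  if_pos ht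

lemma card_devList : ∀ (m : ℕ) (t : ℤ), Nat.card (DevList δ m t) = walkCount δ m t
  | 0, _ => DevList.card_zero
  | 1, t => by
    by_cases ht : |t| ≤ δ
    · rw [DevList.card_one ht, card_devList 0]
      exact (if_pos ht).symm
    · rw [DevList.card_of_lt (not_le.1 ht), walkCount_of_lt (not_le.1 ht)]
  | m + 2, t => by
    by_cases ht : |t| ≤ δ
    · rw [DevList.card_add_two ht, card_devList (m + 1), card_devList (m + 1),
        walkCount_add_two ht]
    · rw [DevList.card_of_lt (not_le.1 ht), walkCount_of_lt (not_le.1 ht)]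

end walkCount

lemma zeta_eq_walkCount (m δ : ℕ) : zeta m δ = walkCount δ m 0 := by
  rw [zeta, ← card_devList]
  exact Nat.card_congr (Equiv.subtypeEquivRight fun _ => isDevSet_iff)

lemma walkCount_four_recurrence (m : ℕ) (t : ℤ) :
    walkCount 4 (m + 6) t + 5 * walkCount 4 (m + 2) t = 5 * walkCount 4 (m + 4) t := by
  induction m generalizing t with
  | zero =>
    by_cases ht : |t| ≤ 4
    · obtain ⟨h₁, h₂⟩ := abs_le.1 ht
      interval_cases t <;> decide
    · simp only [walkCount_of_lt (not_le.1 ht)]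
  | succ m ih =>
    by_cases ht : |t| ≤ 4
    · change walkCount 4 (m + 5 + 2) t + 5 * walkCount 4 (m + 1 + 2) t =
        5 * walkCount 4 (m + 3 + 2) t
      simp only [walkCount_add_two ht]
      linarith [ih (-(t + 1)), ih (t + 1)]
    · simp only [walkCount_of_lt (not_le.1 ht)]

lemma zeta_four_recurrence {m : ℕ} (hm : 1 ≤ m) :
    zeta (m + 4) 4 + 5 * zeta m 4 = 5 * zeta (m + 2) 4 := by
  simp only [zeta_eq_walkCount]
  obtain rfl | ⟨n, rfl⟩ : m = 1 ∨ ∃ n, m = n + 2 := by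
    rcases m with _ | _ | n <;> simp_all
  · decide
  · exact walkCount_four_recurrence n 0

lemma eq_closedForm_of_recurrence {c : ℕ → ℕ}
    (hrec : ∀ m, 1 ≤ m → c (m + 4) + 5 * c m = 5 * c (m + 2))
    (h₁ : c 1 = 1) (h₂ : c 2 = 1) (h₃ : c 3 = 3) (h₄ : c 4 = 3) (m : ℕ) (hm : 1 ≤ m) :
    (c m : ℝ) = (((5 + √5) / 2) ^ ((m + 1) / 2) + ((5 - √5) / 2) ^ ((m + 1) / 2)) / 5 := by
  set s : ℕ → ℝ := fun k => (((5 + √5) / 2) ^ k + ((5 - √5) / 2) ^ k) / 5 with hs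
  have hsqrt : √5 ^ 2 = 5 := Real.sq_sqrt (by norm_num)
  have hroot₁ : ((5 + √5) / 2) ^ 2 = 5 * ((5 + √5) / 2) - 5 := by linear_combination hsqrt / 4
  have hroot₂ : ((5 - √5) / 2) ^ 2 = 5 * ((5 - √5) / 2) - 5 := by linear_combination hsqrt / 4
  have s_one : s 1 = 1 := by simp only [hs]; ring
  have s_two : s 2 = 3 := by simp only [hs]; linear_combination hsqrt / 10
  have s_add_two (k : ℕ) : s (k + 2) = 5 * s (k + 1) - 5 * s k := by
    simp only [hs]
    linear_combination (((5 + √5) / 2) ^ k * hroot₁ + ((5 - √5) / 2) ^ k * hroot₂) / 5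
  change (c m : ℝ) = s ((m + 1) / 2)
  induction m using Nat.strong_induction_on with
  | _ m ih =>
    obtain rfl | rfl | rfl | rfl | ⟨n, hn, rfl⟩ : m = 1 ∨ m = 2 ∨ m = 3 ∨ m = 4 ∨
        ∃ n, 1 ≤ n ∧ m = n + 4 := by
      rcases m with _ | _ | _ | _ | _ | n <;> simp_all
    · simp [h₁, s_one]
    · simp [h₂, s_one]
    · simp [h₃, s_two]
    · simp [h₄, s_two]
    · have hcast : (c (n + 4) : ℝ) = 5 * c (n + 2) - 5 * c n := by
        have := hrec n hn
        rw [eq_sub_iff_add_eq]; exact_mod_cast this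
      rw [hcast, ih (n + 2) (by omega) (by omega), ih n (by omega) hn,
        show (n + 2 + 1) / 2 = (n + 1) / 2 + 1 by omega,
        show (n + 4 + 1) / 2 = (n + 1) / 2 + 2 by omega, s_add_two]

/-- `ζ(m,4) = (((5+√5)/2)^⌊(m+1)/2⌋ + ((5−√5)/2)^⌊(m+1)/2⌋)/5` for all `m ≥ 1`. -/
theorem zeta_four (m : ℕ) (hm : 1 ≤ m) :
    (zeta m 4 : ℝ) =
      (((5 + Real.sqrt 5) / 2) ^ ((m + 1) / 2) +
        ((5 - Real.sqrt 5) / 2) ^ ((m + 1) / 2)) / 5 := by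
  refine eq_closedForm_of_recurrence (c := (zeta · 4)) (fun _ => zeta_four_recurrence)
    ?_ ?_ ?_ ?_ m hm <;> simp only [zeta_eq_walkCount] <;> decide
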